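/- (Weak duality, Wolfe-type static case) Let x satisfy g(x) ≤ 0 and let (u, y, z¹,...,z^p, λ) satisfy Σᵢ λⁱ(∇fⁱ(u) + Bⁱzⁱ) + Σⱼ yʲ∇gʲ(u) = 0, zⁱᵀBⁱzⁱ ≤ 1, y ≥ 0, λ > 0, Σλⁱ = 1. If the function x ↦ Σᵢ λⁱ(fⁱ(x) + xᵀBⁱzⁱ) + yᵀg(x) is pseudoinvex with respect to some η, then it cannot hold that fⁱ(x) + (xᵀBⁱx)^{1/2} ≤ fⁱ(u) + uᵀBⁱzⁱ + yᵀg(u) for all i, with strict inequality for some k. -/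

import Mathlib

open Matrix

/-- The gradient of `F` at `u`, as a vector in `ℝⁿ`. -/
noncomputable def grad {n : ℕ} (F : (Fin n → ℝ) → ℝ) (u : Fin n → ℝ) : Fin n → ℝ :=
  fun j => fderiv ℝ F u (Pi.single j 1)

/-- `F` is pseudoinvex with respect to `η`. -/
def Pseudoinvex {n : ℕ} (F : (Fin n → ℝ) → ℝ)
    (η : (Fin n → ℝ) → (Fin n → ℝ) → Fin n → ℝ) : Prop :=
  ∀ x u, 0 ≤ η x u ⬝ᵥ grad F u → F u ≤ F x

/-- The continuous linear map `v ↦ v ⬝ᵥ w`. -/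
noncomputable def dotCLM {n : ℕ} (w : Fin n → ℝ) : (Fin n → ℝ) →L[ℝ] ℝ :=
  LinearMap.toContinuousLinearMap
    { toFun := fun v => v ⬝ᵥ w
      map_add' := fun a b => add_dotProduct a b w
      map_smul' := fun c a => smul_dotProduct c a w }

lemma dotCLM_apply {n : ℕ} (w v : Fin n → ℝ) : dotCLM w v = v ⬝ᵥ w := rfl

open scoped MatrixOrder in
lemma psd_cs {n : ℕ} {A : Matrix (Fin n) (Fin n) ℝ} (hA : A.PosSemidef) (x z : Fin n → ℝ) :
    x ⬝ᵥ A.mulVec z ≤ Real.sqrt (x ⬝ᵥ A.mulVec x) * Real.sqrt (z ⬝ᵥ A.mulVec z) := by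
  have hSym : (CFC.sqrt A)ᵀ = CFC.sqrt A := by
    have h := (Matrix.nonneg_iff_posSemidef.mp (CFC.sqrt_nonneg A)).1
    rwa [Matrix.IsHermitian, conjTranspose_eq_transpose_of_trivial] at h
  have key : ∀ v w : Fin n → ℝ,
      v ⬝ᵥ A.mulVec w = ((CFC.sqrt A).mulVec v) ⬝ᵥ ((CFC.sqrt A).mulVec w) := by
    intro v w
    conv_lhs => rw [← CFC.sqrt_mul_sqrt_self A hA.nonneg]
    rw [← mulVec_mulVec, dotProduct_mulVec, ← mulVec_transpose, hSym]
  rw [key x z, key x x, key z z]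
  simpa [dotProduct, pow_two] using
    Real.sum_mul_le_sqrt_mul_sqrt Finset.univ ((CFC.sqrt A).mulVec x) ((CFC.sqrt A).mulVec z)

theorem wolfe_weak_duality {n p m : ℕ}
    (f : Fin p → (Fin n → ℝ) → ℝ) (g : Fin m → (Fin n → ℝ) → ℝ)
    (hfd : ∀ i, Differentiable ℝ (f i)) (hgd : ∀ j, Differentiable ℝ (g j))
    (B : Fin p → Matrix (Fin n) (Fin n) ℝ) (hB : ∀ i, (B i).PosSemidef)
    (η : (Fin n → ℝ) → (Fin n → ℝ) → Fin n → ℝ)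
    (x u : Fin n → ℝ) (y : Fin m → ℝ) (z : Fin p → Fin n → ℝ) (lam : Fin p → ℝ)
    (hx : ∀ j, g j x ≤ 0)
    (hdual : (∑ i, lam i • (grad (f i) u + (B i).mulVec (z i))) +
        (∑ j, y j • grad (g j) u) = 0)
    (hz : ∀ i, z i ⬝ᵥ (B i).mulVec (z i) ≤ 1)
    (hy : ∀ j, 0 ≤ y j) (hlam : ∀ i, 0 < lam i) (hlamsum : ∑ i, lam i = 1)
    (hpseudo : Pseudoinvex
      (fun v => (∑ i, lam i * (f i v + v ⬝ᵥ (B i).mulVec (z i))) + ∑ j, y j * g j v) η) :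
    ¬ ((∀ i, f i x + Real.sqrt (x ⬝ᵥ (B i).mulVec x) ≤
          f i u + u ⬝ᵥ (B i).mulVec (z i) + ∑ j, y j * g j u) ∧
       (∃ k, f k x + Real.sqrt (x ⬝ᵥ (B k).mulVec x) <
          f k u + u ⬝ᵥ (B k).mulVec (z k) + ∑ j, y j * g j u)) := by
  rintro ⟨hall, k, hk⟩
  set F : (Fin n → ℝ) → ℝ :=
    fun v => (∑ i, lam i * (f i v + v ⬝ᵥ (B i).mulVec (z i))) + ∑ j, y j * g j v with hF
  -- derivative of F at u
  have hder : HasFDerivAt F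
      ((∑ i, lam i • (fderiv ℝ (f i) u + dotCLM ((B i).mulVec (z i)))) +
        ∑ j, y j • fderiv ℝ (g j) u) u := by
    apply HasFDerivAt.add
    · apply HasFDerivAt.fun_sum
      intro i _
      exact (((hfd i u).hasFDerivAt.add (dotCLM ((B i).mulVec (z i))).hasFDerivAt).const_mul
        (lam i)).congr_fderiv (by ext v; simp [smul_smul])
    · apply HasFDerivAt.fun_sum
      intro j _
      exact ((hgd j u).hasFDerivAt.const_mul (y j)).congr_fderiv (by ext v; simp [smul_smul])
  -- grad F u = 0
  have hgrad : grad F u = 0 := by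
    funext j
    have : fderiv ℝ F u = _ := hder.fderiv
    rw [grad, this]
    have := congrFun hdual j
    simp only [ContinuousLinearMap.add_apply, ContinuousLinearMap.sum_apply,
      ContinuousLinearMap.smul_apply, ContinuousLinearMap.add_apply, dotCLM_apply] at *
    simpa [grad, Pi.add_apply, Pi.smul_apply, smul_eq_mul, Finset.sum_apply, mul_add,
      dotProduct, Pi.single_apply, Finset.sum_ite_eq] using this
  have hFle : F u ≤ F x := hpseudo x u (by rw [hgrad]; simp)
  -- strict inequality chain
  have hgx : ∑ j, y j * g j x ≤ 0 :=
    Finset.sum_nonpos fun j _ => mul_nonpos_of_nonneg_of_nonpos (hy j) (hx j)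
  have hxBz : ∀ i, x ⬝ᵥ (B i).mulVec (z i) ≤ Real.sqrt (x ⬝ᵥ (B i).mulVec x) := by
    intro i
    calc x ⬝ᵥ (B i).mulVec (z i)
        ≤ Real.sqrt (x ⬝ᵥ (B i).mulVec x) * Real.sqrt (z i ⬝ᵥ (B i).mulVec (z i)) :=
          psd_cs (hB i) x (z i)
      _ ≤ Real.sqrt (x ⬝ᵥ (B i).mulVec x) * 1 := by
          apply mul_le_mul_of_nonneg_left _ (Real.sqrt_nonneg _)
          have := Real.sqrt_le_sqrt (hz i)
          simpa using this
      _ = Real.sqrt (x ⬝ᵥ (B i).mulVec x) := mul_one _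
  have hlt : F x < F u := by
    have h1 : F x ≤ ∑ i, lam i * (f i x + Real.sqrt (x ⬝ᵥ (B i).mulVec x)) := by
      show (∑ i, lam i * (f i x + x ⬝ᵥ (B i).mulVec (z i))) + ∑ j, y j * g j x ≤ _
      have : ∑ i, lam i * (f i x + x ⬝ᵥ (B i).mulVec (z i)) ≤
          ∑ i, lam i * (f i x + Real.sqrt (x ⬝ᵥ (B i).mulVec x)) := by
        apply Finset.sum_le_sum
        intro i _
        exact mul_le_mul_of_nonneg_left (by linarith [hxBz i]) (hlam i).le
      linarith
    have h2 : ∑ i, lam i * (f i x + Real.sqrt (x ⬝ᵥ (B i).mulVec x)) <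
        ∑ i, lam i * (f i u + u ⬝ᵥ (B i).mulVec (z i) + ∑ j, y j * g j u) := by
      apply Finset.sum_lt_sum
      · intro i _
        exact mul_le_mul_of_nonneg_left (hall i) (hlam i).le
      · exact ⟨k, Finset.mem_univ k, by
          exact mul_lt_mul_of_pos_left hk (hlam k)⟩
    have h3 : ∑ i, lam i * (f i u + u ⬝ᵥ (B i).mulVec (z i) + ∑ j, y j * g j u) = F u := by
      show _ = (∑ i, lam i * (f i u + u ⬝ᵥ (B i).mulVec (z i))) + ∑ j, y j * g j u
      simp only [mul_add, Finset.sum_add_distrib, ← Finset.sum_mul, hlamsum, one_mul]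
    linarith
  linarith
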